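/- Variable substitution in formulas is functional: for any formula α, variable x, term t, and formulas β, γ, if α[x/t]≡β and α[x/t]≡γ then β = γ. -/

import Mathlib

/-- Variables, indexed by natural numbers. -/
structure FOVar where
  idx : ℕ
deriving DecidableEq

/-- Function symbols: an index and an arity. -/
structure FOFunc where
  idx : ℕ
  arity : ℕ
deriving DecidableEq

/-- Relation symbols: an index and an arity. -/
structure FORel where
  idx : ℕ
  arity : ℕ
deriving DecidableEq

/-- Length-indexed vectors. -/
inductive Vec (A : Type) : ℕ → Type where
  | nil : Vec A 0
  | cons : ∀ {n}, A → Vec A n → Vec A (n + 1)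

/-- A predicate holds on every element of a vector. -/
inductive Vec.All {A : Type} (P : A → Prop) : ∀ {n}, Vec A n → Prop where
  | nil : Vec.All P Vec.nil
  | cons : ∀ {n x} {xs : Vec A n}, P x → Vec.All P xs → Vec.All P (Vec.cons x xs)

/-- First-order terms. -/
inductive Term : Type where
  | varterm : FOVar → Term
  | functerm : (f : FOFunc) → Vec Term f.arity → Term

/-- First-order formulas. -/
inductive Formula : Type where
  | atom : (r : FORel) → Vec Term r.arity → Formula
  | imp : Formula → Formula → Formula
  | and : Formula → Formula → Formula
  | or : Formula → Formula → Formula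
  | all : FOVar → Formula → Formula
  | ex : FOVar → Formula → Formula

/-- The variable x does not occur in a term. -/
inductive NotInTerm (x : FOVar) : Term → Prop where
  | varterm : ∀ {y}, x ≠ y → NotInTerm x (Term.varterm y)
  | functerm : ∀ {f} {us : Vec Term f.arity},
      Vec.All (NotInTerm x) us → NotInTerm x (Term.functerm f us)

/-- The variable x does not occur in any term of a vector. -/
def NotInTerms {n : ℕ} (x : FOVar) (ts : Vec Term n) : Prop :=
  Vec.All (NotInTerm x) ts

/-- The variable x is not free in a formula. -/
inductive NotFreeIn : FOVar → Formula → Prop where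
  | atom : ∀ {x r} {ts : Vec Term r.arity},
      NotInTerms x ts → NotFreeIn x (Formula.atom r ts)
  | imp : ∀ {x α β}, NotFreeIn x α → NotFreeIn x β → NotFreeIn x (Formula.imp α β)
  | and : ∀ {x α β}, NotFreeIn x α → NotFreeIn x β → NotFreeIn x (Formula.and α β)
  | or : ∀ {x α β}, NotFreeIn x α → NotFreeIn x β → NotFreeIn x (Formula.or α β)
  | all_self : ∀ x α, NotFreeIn x (Formula.all x α)
  | ex_self : ∀ x α, NotFreeIn x (Formula.ex x α)
  | all : ∀ {x α} (y : FOVar), NotFreeIn x α → NotFreeIn x (Formula.all y α)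
  | ex : ∀ {x α} (y : FOVar), NotFreeIn x α → NotFreeIn x (Formula.ex y α)

mutual
/-- ⟨u⟩[x/t]≡v : substituting t for x in the term u yields v. -/
inductive TermSub : Term → FOVar → Term → Term → Prop where
  | var_eq : ∀ {x t}, TermSub (Term.varterm x) x t t
  | var_ne : ∀ {x t y}, x ≠ y → TermSub (Term.varterm y) x t (Term.varterm y)
  | functerm : ∀ {x t f} {us vs : Vec Term f.arity},
      TermsSub us x t vs → TermSub (Term.functerm f us) x t (Term.functerm f vs)

/-- [us][x/t]≡vs : componentwise substitution in vectors of terms. -/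
inductive TermsSub : ∀ {n}, Vec Term n → FOVar → Term → Vec Term n → Prop where
  | nil : ∀ {x t}, TermsSub Vec.nil x t Vec.nil
  | cons : ∀ {x t u v n} {us vs : Vec Term n},
      TermSub u x t v → TermsSub us x t vs →
      TermsSub (Vec.cons u us) x t (Vec.cons v vs)
end

/-- α[x/t]≡β : substituting t for all free occurrences of x in α yields β. -/
inductive FormulaSub : Formula → FOVar → Term → Formula → Prop where
  | ident : ∀ α x, FormulaSub α x (Term.varterm x) α
  | notfree : ∀ {α x t}, NotFreeIn x α → FormulaSub α x t α
  | atom : ∀ {x t} (r : FORel) {us vs : Vec Term r.arity},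
      TermsSub us x t vs → FormulaSub (Formula.atom r us) x t (Formula.atom r vs)
  | imp : ∀ {α α' β β' x t}, FormulaSub α x t α' → FormulaSub β x t β' →
      FormulaSub (Formula.imp α β) x t (Formula.imp α' β')
  | and : ∀ {α α' β β' x t}, FormulaSub α x t α' → FormulaSub β x t β' →
      FormulaSub (Formula.and α β) x t (Formula.and α' β')
  | or : ∀ {α α' β β' x t}, FormulaSub α x t α' → FormulaSub β x t β' →
      FormulaSub (Formula.or α β) x t (Formula.or α' β')
  | all_self : ∀ {t} x α, FormulaSub (Formula.all x α) x t (Formula.all x α)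
  | ex_self : ∀ {t} x α, FormulaSub (Formula.ex x α) x t (Formula.ex x α)
  | all : ∀ {α β x y t}, x ≠ y → NotInTerm y t → FormulaSub α x t β →
      FormulaSub (Formula.all y α) x t (Formula.all y β)
  | ex : ∀ {α β x y t}, x ≠ y → NotInTerm y t → FormulaSub α x t β →
      FormulaSub (Formula.ex y α) x t (Formula.ex y β)

/-- The term t is free for the variable x in a formula. -/
inductive FreeFor (t : Term) (x : FOVar) : Formula → Prop where
  | notfree : ∀ {α}, NotFreeIn x α → FreeFor t x α
  | atom : ∀ r us, FreeFor t x (Formula.atom r us)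
  | imp : ∀ {α β}, FreeFor t x α → FreeFor t x β → FreeFor t x (Formula.imp α β)
  | and : ∀ {α β}, FreeFor t x α → FreeFor t x β → FreeFor t x (Formula.and α β)
  | or : ∀ {α β}, FreeFor t x α → FreeFor t x β → FreeFor t x (Formula.or α β)
  | all_self : ∀ α, FreeFor t x (Formula.all x α)
  | ex_self : ∀ α, FreeFor t x (Formula.ex x α)
  | all : ∀ {α y}, NotInTerm y t → FreeFor t x α → FreeFor t x (Formula.all y α)
  | ex : ∀ {α y}, NotInTerm y t → FreeFor t x α → FreeFor t x (Formula.ex y α)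

/-- The variable x appears nowhere (free or bound) in a formula. -/
inductive FreshIn (x : FOVar) : Formula → Prop where
  | atom : ∀ {r} {ts : Vec Term r.arity}, NotInTerms x ts → FreshIn x (Formula.atom r ts)
  | imp : ∀ {α β}, FreshIn x α → FreshIn x β → FreshIn x (Formula.imp α β)
  | and : ∀ {α β}, FreshIn x α → FreshIn x β → FreshIn x (Formula.and α β)
  | or : ∀ {α β}, FreshIn x α → FreshIn x β → FreshIn x (Formula.or α β)
  | all : ∀ {α y}, y ≠ x → FreshIn x α → FreshIn x (Formula.all y α)
  | ex : ∀ {α y}, y ≠ x → FreshIn x α → FreshIn x (Formula.ex y α)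

/-- Formula equivalence: equality up to renaming of bound variables. -/
inductive FormulaEquiv : Formula → Formula → Prop where
  | atom : ∀ r ts, FormulaEquiv (Formula.atom r ts) (Formula.atom r ts)
  | imp : ∀ {α β α' β'}, FormulaEquiv α α' → FormulaEquiv β β' →
      FormulaEquiv (Formula.imp α β) (Formula.imp α' β')
  | and : ∀ {α β α' β'}, FormulaEquiv α α' → FormulaEquiv β β' →
      FormulaEquiv (Formula.and α β) (Formula.and α' β')
  | or : ∀ {α β α' β'}, FormulaEquiv α α' → FormulaEquiv β β' →
      FormulaEquiv (Formula.or α β) (Formula.or α' β')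
  | all : ∀ {α α'} (x : FOVar), FormulaEquiv α α' → FormulaEquiv (Formula.all x α) (Formula.all x α')
  | ex : ∀ {α α'} (x : FOVar), FormulaEquiv α α' → FormulaEquiv (Formula.ex x α) (Formula.ex x α')
  | all_rename : ∀ {α β β' x y}, NotFreeIn y α →
      FormulaSub α x (Term.varterm y) β → FormulaEquiv β β' →
      FormulaEquiv (Formula.all x α) (Formula.all y β')
  | ex_rename : ∀ {α β β' x y}, NotFreeIn y α →
      FormulaSub α x (Term.varterm y) β → FormulaEquiv β β' →
      FormulaEquiv (Formula.ex x α) (Formula.ex y β')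
  | all_rename' : ∀ {α α' β' x y}, FormulaEquiv α α' → NotFreeIn y α' →
      FormulaSub α' x (Term.varterm y) β' →
      FormulaEquiv (Formula.all x α) (Formula.all y β')
  | ex_rename' : ∀ {α α' β' x y}, FormulaEquiv α α' → NotFreeIn y α' →
      FormulaSub α' x (Term.varterm y) β' →
      FormulaEquiv (Formula.ex x α) (Formula.ex y β')

/-- Natural deduction for minimal first-order logic. -/
inductive Deduction : Set Formula → Formula → Prop where
  | assume : ∀ (α : Formula), Deduction {α} α
  | close : ∀ {Γ Δ : Set Formula} {α}, Γ ⊆ Δ → Deduction Γ α → Deduction Δ α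
  | arrowintro : ∀ {Γ β} (α : Formula), Deduction Γ β →
      Deduction (Γ \ {α}) (Formula.imp α β)
  | arrowelim : ∀ {Γ₁ Γ₂ α β}, Deduction Γ₁ (Formula.imp α β) → Deduction Γ₂ α →
      Deduction (Γ₁ ∪ Γ₂) β
  | conjintro : ∀ {Γ₁ Γ₂ α β}, Deduction Γ₁ α → Deduction Γ₂ β →
      Deduction (Γ₁ ∪ Γ₂) (Formula.and α β)
  | conjelim : ∀ {Γ₁ Γ₂ α β γ}, Deduction Γ₁ (Formula.and α β) → Deduction Γ₂ γ →
      Deduction (Γ₁ ∪ (Γ₂ \ {α, β})) γ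
  | disjintro1 : ∀ {Γ α} (β : Formula), Deduction Γ α → Deduction Γ (Formula.or α β)
  | disjintro2 : ∀ {Γ β} (α : Formula), Deduction Γ β → Deduction Γ (Formula.or α β)
  | disjelim : ∀ {Γ₁ Γ₂ Γ₃ α β γ}, Deduction Γ₁ (Formula.or α β) →
      Deduction Γ₂ γ → Deduction Γ₃ γ →
      Deduction (Γ₁ ∪ (Γ₂ \ {α}) ∪ (Γ₃ \ {β})) γ
  | univintro : ∀ {Γ α} (x : FOVar), (∀ γ ∈ Γ, NotFreeIn x γ) →
      Deduction Γ α → Deduction Γ (Formula.all x α)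
  | univelim : ∀ {Γ α x β} (t : Term), FormulaSub α x t β →
      Deduction Γ (Formula.all x α) → Deduction Γ β
  | existintro : ∀ {Γ α β} (t : Term) (x : FOVar), FormulaSub α x t β →
      Deduction Γ β → Deduction Γ (Formula.ex x α)
  | existelim : ∀ {Γ₁ Γ₂ α β x}, NotFreeIn x β → (∀ γ ∈ Γ₂ \ {α}, NotFreeIn x γ) →
      Deduction Γ₁ (Formula.ex x α) → Deduction Γ₂ β →
      Deduction (Γ₁ ∪ (Γ₂ \ {α})) β

/-- ⊥: the atom of a fixed nullary relation symbol. -/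
def Formula.bot : Formula := Formula.atom ⟨0, 0⟩ Vec.nil

/-- ¬α is α ⇒ ⊥. -/
def Formula.neg (α : Formula) : Formula := Formula.imp α Formula.bot

/-! Every derivation of α[x/t]≡β produces the naive substitution `α.subst x t`, which replaces
the free occurrences of x and never renames bound variables: the `ident` and `notfree` rules
agree with it because it fixes α in those cases, and the side conditions of the quantifier rules
only restrict when a derivation exists, not what it produces. -/

mutual
def Term.subst : Term → FOVar → Term → Term
  | .varterm y, x, t => if y = x then t else .varterm y
  | .functerm f us, x, t => .functerm f (Term.substVec us x t)

def Term.substVec : {n : ℕ} → Vec Term n → FOVar → Term → Vec Term n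
  | _, .nil, _, _ => .nil
  | _, .cons u us, x, t => .cons (u.subst x t) (Term.substVec us x t)
end

def Formula.subst : Formula → FOVar → Term → Formula
  | .atom r ts, x, t => .atom r (Term.substVec ts x t)
  | .imp α β, x, t => .imp (α.subst x t) (β.subst x t)
  | .and α β, x, t => .and (α.subst x t) (β.subst x t)
  | .or α β, x, t => .or (α.subst x t) (β.subst x t)
  | .all y α, x, t => .all y (if y = x then α else α.subst x t)
  | .ex y α, x, t => .ex y (if y = x then α else α.subst x t)

mutual
theorem Term.subst_self : ∀ (u : Term) (x : FOVar), u.subst x (.varterm x) = u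
  | .varterm y, x => by by_cases h : y = x <;> simp [Term.subst, h]
  | .functerm f us, x => by rw [Term.subst, Term.substVec_self]

theorem Term.substVec_self : ∀ {n : ℕ} (us : Vec Term n) (x : FOVar),
    Term.substVec us x (.varterm x) = us
  | _, .nil, _ => rfl
  | _, .cons u us, x => by rw [Term.substVec, Term.subst_self, Term.substVec_self]
end

mutual
theorem Term.subst_of_notInTerm : ∀ {x : FOVar} {u : Term} (t : Term),
    NotInTerm x u → u.subst x t = u
  | _, _, _, .varterm h => by simp [Term.subst, Ne.symm h]
  | _, _, t, .functerm h => by rw [Term.subst, Term.substVec_of_notInTerms t h]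

theorem Term.substVec_of_notInTerms : ∀ {x : FOVar} {n : ℕ} {us : Vec Term n} (t : Term),
    NotInTerms x us → Term.substVec us x t = us
  | _, _, _, _, .nil => rfl
  | _, _, _, t, .cons h hs => by
      rw [Term.substVec, Term.subst_of_notInTerm t h, Term.substVec_of_notInTerms t hs]
end

theorem Formula.subst_self (α : Formula) (x : FOVar) : α.subst x (.varterm x) = α := by
  induction α <;> simp_all [Formula.subst, Term.substVec_self]

theorem Formula.subst_of_notFreeIn {x : FOVar} {α : Formula} (t : Term) (h : NotFreeIn x α) :
    α.subst x t = α := by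
  induction h <;> simp_all [Formula.subst, Term.substVec_of_notInTerms]

mutual
theorem TermSub.eq_subst : ∀ {u : Term} {x : FOVar} {t v : Term},
    TermSub u x t v → v = u.subst x t
  | _, _, _, _, .var_eq => by simp [Term.subst]
  | _, _, _, _, .var_ne h => by simp [Term.subst, Ne.symm h]
  | _, _, _, _, .functerm hs => by rw [Term.subst, hs.eq_substVec]

theorem TermsSub.eq_substVec :
    ∀ {n : ℕ} {us : Vec Term n} {x : FOVar} {t : Term} {vs : Vec Term n},
    TermsSub us x t vs → vs = Term.substVec us x t
  | _, _, _, _, _, .nil => rfl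
  | _, _, _, _, _, .cons h hs => by rw [Term.substVec, h.eq_subst, hs.eq_substVec]
end

theorem FormulaSub.eq_subst {α : Formula} {x : FOVar} {t : Term} {β : Formula}
    (h : FormulaSub α x t β) : β = α.subst x t := by
  induction h with
  | ident α x => exact (α.subst_self x).symm
  | notfree h => exact (Formula.subst_of_notFreeIn _ h).symm
  | atom r hs => rw [Formula.subst, hs.eq_substVec]
  | all hne _ _ ih | ex hne _ _ ih => simp [Formula.subst, Ne.symm hne, ih]
  | _ => simp_all [Formula.subst]

/-- Variable substitution in formulas is functional. -/
theorem formulaSub_functional {α : Formula} {x : FOVar} {t : Term} {β γ : Formula}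
    (h₁ : FormulaSub α x t β) (h₂ : FormulaSub α x t γ) : β = γ := by
  rw [h₁.eq_subst, h₂.eq_subst]
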